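/- For each 1 ≤ k ≤ m, the map ψ_k : 𝒩_{k−1} → 𝒩_k is surjective: for every (N, A) ∈ 𝒩_k there exists (N′, A′) ∈ 𝒩_{k−1} with ψ_k(N′, A′) = (N, A). -/

import Mathlib

open Finset

/-- The support of a signed subset `X = (X⁺, X⁻)`. -/
def supp {α : Type} [DecidableEq α] (X : Finset α × Finset α) : Finset α := X.1 ∪ X.2

/-- An oriented matroid on ground set `α`, given by its collection of signed circuits,
satisfying the signed circuit axioms (C1)-(C4). -/
structure OM (α : Type) [DecidableEq α] where
  C : Set (Finset α × Finset α)
  disj : ∀ X ∈ C, Disjoint X.1 X.2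
  not_empty_mem : ((∅ : Finset α), (∅ : Finset α)) ∉ C
  neg_mem : ∀ X ∈ C, (X.2, X.1) ∈ C
  incomp : ∀ X ∈ C, ∀ Y ∈ C, supp X ⊆ supp Y → X = Y ∨ X = (Y.2, Y.1)
  elimAx : ∀ X ∈ C, ∀ Y ∈ C, X ≠ Y → X ≠ (Y.2, Y.1) → ∀ e ∈ X.1 ∩ Y.2,
    ∃ Z ∈ C, Z.1 ⊆ (X.1 ∪ Y.1).erase e ∧ Z.2 ⊆ (X.2 ∪ Y.2).erase e

/-- A collection of signed subsets is acyclic if it contains no positive member. -/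
def Acyclic {α : Type} (C : Set (Finset α × Finset α)) : Prop :=
  ∀ X ∈ C, X.2 ≠ ∅

/-- Reorientation of a signed subset by `A`. -/
def reorient {α : Type} [DecidableEq α] (A : Finset α) (X : Finset α × Finset α) :
    Finset α × Finset α :=
  ((X.1 \ A) ∪ (X.2 ∩ A), (X.2 \ A) ∪ (X.1 ∩ A))

/-- Reorientation of a collection of signed subsets by `A`. -/
def reorientC {α : Type} [DecidableEq α] (A : Finset α)
    (C : Set (Finset α × Finset α)) : Set (Finset α × Finset α) :=
  reorient A '' C

/-- Deletion: keep the members whose support avoids `D`. -/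
def delC {α : Type} [DecidableEq α] (D : Finset α)
    (C : Set (Finset α × Finset α)) : Set (Finset α × Finset α) :=
  {X ∈ C | Disjoint (supp X) D}

/-- The pre-circuits of the contraction by `T`. -/
def contrPre {α : Type} [DecidableEq α] (T : Finset α)
    (C : Set (Finset α × Finset α)) : Set (Finset α × Finset α) :=
  {Z | ∃ Y ∈ C, supp Y \ T ≠ ∅ ∧ Z = (Y.1 \ T, Y.2 \ T)}

/-- Contraction: the support-inclusion-minimal members of `contrPre T C`. -/
def contrC {α : Type} [DecidableEq α] (T : Finset α)
    (C : Set (Finset α × Finset α)) : Set (Finset α × Finset α) :=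
  {Z ∈ contrPre T C | ∀ W ∈ contrPre T C, supp W ⊆ supp Z → supp W = supp Z}

/-- `N` is an NBC subset of the underlying matroid of `M`: it contains no
broken circuit, i.e. no circuit of the underlying matroid with its maximal
element deleted. -/
def IsNBC {α : Type} [DecidableEq α] [LinearOrder α] (M : OM α) (N : Finset α) : Prop :=
  ∀ X ∈ M.C, ∀ h : (supp X).Nonempty, ¬ (supp X).erase ((supp X).max' h) ⊆ N

/-- `E_k = {e₁, …, e_k}`: the first `k` elements of the ground set `Fin m`. -/
def Ek (m k : ℕ) : Finset (Fin m) := Finset.filter (fun i => (i : ℕ) < k) Finset.univ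

/-- `M` is loopless: no signed circuit has support of size one. -/
def Loopless {m : ℕ} (M : OM (Fin m)) : Prop := ∀ X ∈ M.C, (supp X).card ≠ 1

/-- `M(N, A) = ₋ₐ(M ∖ (E_k − N) / N)`. -/
def MNA {m : ℕ} (M : OM (Fin m)) (k : ℕ) (N A : Finset (Fin m)) :
    Set (Finset (Fin m) × Finset (Fin m)) :=
  reorientC A (contrC N (delC (Ek m k \ N) M.C))

/-- The set `𝒩_k` of pairs `(N, A)` with `N ⊆ E_k` an NBC subset of the underlying
matroid, `A ⊆ E − E_k`, and `M(N, A)` acyclic. -/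
def NFam {m : ℕ} (M : OM (Fin m)) (k : ℕ) : Set (Finset (Fin m) × Finset (Fin m)) :=
  {p | p.1 ⊆ Ek m k ∧ IsNBC M p.1 ∧ p.2 ⊆ (Ek m k)ᶜ ∧ Acyclic (MNA M k p.1 p.2)}

open scoped Classical in
/-- The map `ψ_k` (where `j = k - 1` and `e = e_k`), defined on `𝒩_{k-1}`:
`ψ_k(N, A) = (N ∪ {e_k}, A)` if `e_k ∉ A` and `₋{e_k}M(N, A)` is acyclic,
`ψ_k(N, A) = (N, A)` if `e_k ∉ A` and `₋{e_k}M(N, A)` is not acyclic, and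
`ψ_k(N, A) = (N, A − {e_k})` if `e_k ∈ A`. -/
noncomputable def psi {m : ℕ} (M : OM (Fin m)) (j : ℕ) (e : Fin m)
    (p : Finset (Fin m) × Finset (Fin m)) : Finset (Fin m) × Finset (Fin m) :=
  if e ∈ p.2 then (p.1, p.2.erase e)
  else if Acyclic (reorientC {e} (MNA M j p.1 p.2)) then (insert e p.1, p.2)
  else p


/-!
Let `e = e_k` and `D = E_k − N`. If `N` is independent (as NBC sets are), the contraction
`(M ∖ D) / N` has a positive circuit iff some signed circuit `Y` of `M ∖ D` has `Y⁻ ⊆ N`. Among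
those, one with `|Y̲ − N|` minimal restricts to a circuit of the contraction: otherwise pick a
circuit `W` whose restriction is strictly smaller, with `|W⁻ − N|` minimal, and eliminate an
element of `W⁻ − N` between `Y` and `W`. So every acyclicity condition on some `M(N, A)` becomes a
condition on the signed circuits of `₋ₐM`.

A preimage of `(N, A) ∈ 𝒩_k` is then `(N − e, A)` if `e ∈ N`. If `e ∉ N` it is `(N, A ∪ e)` when
`₋{e}M(N, A)` is acyclic at level `k − 1`, and `(N, A)` otherwise: eliminating `e` between a
circuit witnessing that `₋{e}M(N, A)` is not acyclic and one witnessing that `M(N, A)` is not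
acyclic gives a circuit of `₋ₐ(M ∖ D)` with negative part in `N`. The two circuits are not
opposite because no circuit lies inside `N ∪ e`, `e` being larger than every element of `N`.
-/

section SignedSets
variable {α : Type} [DecidableEq α]

theorem supp_swap (X : Finset α × Finset α) : supp X.swap = supp X := union_comm _ _

theorem supp_eq_empty_iff {X : Finset α × Finset α} : supp X = ∅ ↔ X = (∅, ∅) := by
  rw [supp, union_eq_empty, Prod.ext_iff]

theorem supp_pair_sdiff (T : Finset α) (X : Finset α × Finset α) :
    supp (X.1 \ T, X.2 \ T) = supp X \ T := (union_sdiff_distrib _ _ _).symm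

theorem supp_subset_erase {X Y Z : Finset α × Finset α} {e : α}
    (h1 : Z.1 ⊆ (X.1 ∪ Y.1).erase e) (h2 : Z.2 ⊆ (X.2 ∪ Y.2).erase e) :
    supp Z ⊆ (supp X ∪ supp Y).erase e := by
  intro x hx
  rcases mem_union.mp hx with hx | hx
  · have := h1 hx; simp only [supp, mem_erase, mem_union] at this ⊢; tauto
  · have := h2 hx; simp only [supp, mem_erase, mem_union] at this ⊢; tauto

@[simp]
theorem supp_reorient (A : Finset α) (X : Finset α × Finset α) :
    supp (reorient A X) = supp X := by
  ext x; simp only [supp, reorient, mem_union, mem_sdiff, mem_inter]; tauto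

theorem reorient_pair_sdiff (A T : Finset α) (X : Finset α × Finset α) :
    reorient A (X.1 \ T, X.2 \ T) = ((reorient A X).1 \ T, (reorient A X).2 \ T) := by
  ext x <;> simp only [reorient, mem_union, mem_sdiff, mem_inter] <;> tauto

theorem reorient_insert {e : α} {A : Finset α} (he : e ∉ A) (X : Finset α × Finset α) :
    reorient (insert e A) X = reorient {e} (reorient A X) := by
  ext x <;> by_cases hx : x = e <;> simp_all [reorient]

theorem reorient_fst_subset_erase {A : Finset α} {e : α} {X Y Z : Finset α × Finset α}
    (h1 : Z.1 ⊆ (X.1 ∪ Y.1).erase e) (h2 : Z.2 ⊆ (X.2 ∪ Y.2).erase e) :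
    (reorient A Z).1 ⊆ ((reorient A X).1 ∪ (reorient A Y).1).erase e := by
  intro x hx
  simp only [reorient, mem_union, mem_sdiff, mem_inter, mem_erase] at hx ⊢
  rcases hx with ⟨hx, hxA⟩ | ⟨hx, hxA⟩
  · have := h1 hx; simp only [mem_erase, mem_union] at this; tauto
  · have := h2 hx; simp only [mem_erase, mem_union] at this; tauto

theorem snd_subset_insert_of_reorient_singleton {e : α} {N : Finset α}
    {X : Finset α × Finset α} (h : (reorient {e} X).2 ⊆ N) : X.2 ⊆ insert e N := by
  intro x hx
  by_cases hxe : x = e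
  · exact hxe ▸ mem_insert_self e N
  · exact mem_insert_of_mem (h (by simp [reorient, hx, hxe]))

theorem notMem_fst_of_reorient_singleton {e : α} {N : Finset α} {X : Finset α × Finset α}
    (h : (reorient {e} X).2 ⊆ N) (heN : e ∉ N) : e ∉ X.1 :=
  fun heX => heN (h (by simp [reorient, heX]))

theorem mem_delC_insert_iff {D : Finset α} {e : α} {C : Set (Finset α × Finset α)}
    {X : Finset α × Finset α} :
    X ∈ delC (insert e D) C ↔ X ∈ delC D C ∧ e ∉ supp X := by
  simp only [delC, Set.mem_ofPred_eq, disjoint_insert_right]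
  tauto

end SignedSets

section Minors
variable {α : Type} [DecidableEq α]

theorem contrPre_reorientC (T A : Finset α) (C : Set (Finset α × Finset α)) :
    contrPre T (reorientC A C) = reorientC A (contrPre T C) := by
  ext Z
  constructor
  · rintro ⟨_, ⟨Y, hY, rfl⟩, hne, rfl⟩
    rw [supp_reorient] at hne
    exact ⟨_, ⟨Y, hY, hne, rfl⟩, reorient_pair_sdiff A T Y⟩
  · rintro ⟨_, ⟨Y, hY, hne, rfl⟩, rfl⟩
    exact ⟨reorient A Y, ⟨Y, hY, rfl⟩, by rwa [supp_reorient], reorient_pair_sdiff A T Y⟩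

theorem contrC_reorientC (T A : Finset α) (C : Set (Finset α × Finset α)) :
    contrC T (reorientC A C) = reorientC A (contrC T C) := by
  ext Z
  constructor
  · rintro ⟨hZ, hmin⟩
    rw [contrPre_reorientC] at hZ hmin
    obtain ⟨Z₀, hZ₀, rfl⟩ := hZ
    refine ⟨Z₀, ⟨hZ₀, fun W hW hsub => ?_⟩, rfl⟩
    simpa using hmin (reorient A W) ⟨W, hW, rfl⟩ (by simpa using hsub)
  · rintro ⟨Z₀, ⟨hZ₀, hmin⟩, rfl⟩
    rw [contrC, Set.mem_ofPred_eq, contrPre_reorientC]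
    refine ⟨⟨Z₀, hZ₀, rfl⟩, ?_⟩
    rintro _ ⟨W, hW, rfl⟩ hsub
    simpa using hmin W hW (by simpa using hsub)

end Minors

namespace OM
variable {α : Type} [DecidableEq α] (M : OM α)

theorem exists_elim {X Y : Finset α × Finset α} (hX : X ∈ M.C) (hY : Y ∈ M.C)
    (hXY : X ≠ Y.swap) {e : α} (heX : e ∈ X.1) (heY : e ∈ Y.2) :
    ∃ Z ∈ M.C, Z.1 ⊆ (X.1 ∪ Y.1).erase e ∧ Z.2 ⊆ (X.2 ∪ Y.2).erase e :=
  M.elimAx X hX Y hY (by rintro rfl; exact disjoint_left.mp (M.disj X hX) heX heY) hXY e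
    (mem_inter.mpr ⟨heX, heY⟩)

theorem supp_nonempty_of_mem {X : Finset α × Finset α} (hX : X ∈ M.C) : (supp X).Nonempty :=
  nonempty_iff_ne_empty.mpr fun h => M.not_empty_mem (supp_eq_empty_iff.mp h ▸ hX)

def delete (D : Finset α) : OM α where
  C := delC D M.C
  disj X hX := M.disj X hX.1
  not_empty_mem h := M.not_empty_mem h.1
  neg_mem X hX := ⟨M.neg_mem X hX.1, (supp_swap X).symm ▸ hX.2⟩
  incomp X hX Y hY := M.incomp X hX.1 Y hY.1
  elimAx X hX Y hY hXY hXY' e he := by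
    obtain ⟨Z, hZ, hZ1, hZ2⟩ := M.elimAx X hX.1 Y hY.1 hXY hXY' e he
    refine ⟨Z, ⟨hZ, ?_⟩, hZ1, hZ2⟩
    exact (disjoint_union_left.mpr ⟨hX.2, hY.2⟩).mono_left
      ((supp_subset_erase hZ1 hZ2).trans (erase_subset _ _))

def reorient (A : Finset α) : OM α where
  C := reorientC A M.C
  disj := by
    rintro _ ⟨X, hX, rfl⟩
    refine disjoint_left.mpr fun x hx hx' => ?_
    have := @disjoint_left.mp (M.disj X hX) x
    simp only [_root_.reorient, mem_union, mem_sdiff, mem_inter] at hx hx'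
    tauto
  not_empty_mem := by
    rintro ⟨X, hX, hX0⟩
    rw [← supp_eq_empty_iff, supp_reorient, supp_eq_empty_iff] at hX0
    exact M.not_empty_mem (hX0 ▸ hX)
  neg_mem := by
    rintro _ ⟨X, hX, rfl⟩
    exact ⟨X.swap, M.neg_mem X hX, rfl⟩
  incomp := by
    rintro _ ⟨X, hX, rfl⟩ _ ⟨Y, hY, rfl⟩ hsub
    rw [supp_reorient, supp_reorient] at hsub
    rcases M.incomp X hX Y hY hsub with rfl | rfl
    · exact Or.inl rfl
    · exact Or.inr rfl
  elimAx := by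
    rintro _ ⟨X, hX, rfl⟩ _ ⟨Y, hY, rfl⟩ - hXY f hf
    have hXY' : X ≠ Y.swap := fun h => hXY (by rw [h]; rfl)
    have hf' := mem_inter.mp hf
    simp only [_root_.reorient, mem_union, mem_sdiff, mem_inter] at hf'
    obtain ⟨Z, hZ, hZ1, hZ2⟩ : ∃ Z ∈ M.C, Z.1 ⊆ (X.1 ∪ Y.1).erase f ∧
        Z.2 ⊆ (X.2 ∪ Y.2).erase f := by
      by_cases hfA : f ∈ A
      · have hYX : Y ≠ X.swap := fun h => hXY' (by rw [h]; rfl)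
        obtain ⟨Z, hZ, hZ1, hZ2⟩ := M.exists_elim hY hX hYX (by tauto) (by tauto)
        exact ⟨Z, hZ, union_comm Y.1 X.1 ▸ hZ1, union_comm Y.2 X.2 ▸ hZ2⟩
      · exact M.exists_elim hX hY hXY' (by tauto) (by tauto)
    exact ⟨_root_.reorient A Z, ⟨Z, hZ, rfl⟩, reorient_fst_subset_erase hZ1 hZ2,
      reorient_fst_subset_erase (X := X.swap) (Y := Y.swap) (Z := Z.swap) hZ2 hZ1⟩

theorem exists_elim_outside {T : Finset α} {V W : Finset α × Finset α} (hV : V ∈ M.C)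
    (hW : W ∈ M.C) (hVT : V.2 ⊆ T) (hWV : supp W \ T ⊂ supp V \ T) (hWT : ¬ W.2 ⊆ T) :
    ∃ X ∈ M.C, supp X \ T ⊂ supp V \ T ∧ (X.2 \ T).card < (W.2 \ T).card := by
  obtain ⟨f, hfW, hfT⟩ := not_subset.mp hWT
  have hfV : f ∈ supp V \ T := hWV.subset (mem_sdiff.mpr ⟨mem_union_right _ hfW, hfT⟩)
  have hfV1 : f ∈ V.1 := by
    rcases mem_union.mp (mem_sdiff.mp hfV).1 with h | h
    · exact h
    · exact absurd (hVT h) hfT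
  have hVW : V ≠ W.swap := by
    rintro rfl
    rw [supp_swap] at hfV hWV
    exact hWV.ne rfl
  obtain ⟨X, hX, hX1, hX2⟩ := M.exists_elim hV hW hVW hfV1 hfW
  have hXsupp := supp_subset_erase hX1 hX2
  refine ⟨X, hX, (ssubset_iff_of_subset ?_).mpr ⟨f, hfV, ?_⟩, ?_⟩
  · intro x hx
    obtain ⟨hxX, hxT⟩ := mem_sdiff.mp hx
    rcases mem_union.mp (mem_of_mem_erase (hXsupp hxX)) with h | h
    · exact mem_sdiff.mpr ⟨h, hxT⟩
    · exact hWV.subset (mem_sdiff.mpr ⟨h, hxT⟩)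
  · exact fun h => (mem_erase.mp (hXsupp (mem_sdiff.mp h).1)).1 rfl
  · refine (card_le_card fun x hx => ?_).trans_lt
      (card_erase_lt_of_mem (mem_sdiff.mpr ⟨hfW, hfT⟩))
    obtain ⟨hxX, hxT⟩ := mem_sdiff.mp hx
    obtain ⟨hxf, hxVW⟩ := mem_erase.mp (hX2 hxX)
    rcases mem_union.mp hxVW with h | h
    · exact absurd (hVT h) hxT
    · exact mem_erase.mpr ⟨hxf, mem_sdiff.mpr ⟨h, hxT⟩⟩

theorem exists_positive_mem_contrC {T : Finset α} (hT : ∀ Y ∈ M.C, ¬ supp Y ⊆ T)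
    {Y₀ : Finset α × Finset α} (hY₀ : Y₀ ∈ M.C) (hY₀T : Y₀.2 ⊆ T) :
    ∃ Z ∈ contrC T M.C, Z.2 = ∅ := by
  obtain ⟨V, ⟨hV, hVT⟩, hVmin⟩ :=
    (measure fun V : Finset α × Finset α => (supp V \ T).card).wf.has_min
      {V | V ∈ M.C ∧ V.2 ⊆ T} ⟨Y₀, hY₀, hY₀T⟩
  refine ⟨(V.1 \ T, V.2 \ T), ⟨⟨V, hV, ?_, rfl⟩, ?_⟩, sdiff_eq_empty_iff_subset.mpr hVT⟩
  · rw [Ne, sdiff_eq_empty_iff_subset]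
    exact hT V hV
  rintro _ ⟨W₀, hW₀, -, rfl⟩ hsub
  simp only [supp_pair_sdiff] at hsub ⊢
  by_contra hne
  obtain ⟨W, ⟨hW, hWV⟩, hWmin⟩ :=
    (measure fun W : Finset α × Finset α => (W.2 \ T).card).wf.has_min
      {W | W ∈ M.C ∧ supp W \ T ⊂ supp V \ T} ⟨W₀, hW₀, hsub.ssubset_of_ne hne⟩
  by_cases hWT : W.2 ⊆ T
  · exact hVmin W ⟨hW, hWT⟩ (card_lt_card hWV)
  · obtain ⟨X, hX, hXV, hXW⟩ := M.exists_elim_outside hV hW hVT hWV hWT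
    exact hWmin X ⟨hX, hXV⟩ hXW

theorem acyclic_contrC_iff {T : Finset α} (hT : ∀ Y ∈ M.C, ¬ supp Y ⊆ T) :
    Acyclic (contrC T M.C) ↔ ∀ Y ∈ M.C, ¬ Y.2 ⊆ T := by
  constructor
  · intro h Y hY hYT
    obtain ⟨Z, hZ, hZ2⟩ := M.exists_positive_mem_contrC hT hY hYT
    exact h Z hZ hZ2
  · rintro h _ ⟨⟨Y, hY, -, rfl⟩, -⟩ hY2
    exact h Y hY (sdiff_eq_empty_iff_subset.mp hY2)

end OM

section NBC
variable {α : Type} [DecidableEq α] [LinearOrder α] {M : OM α} {N : Finset α}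

theorem IsNBC.mono {N' : Finset α} (hN : IsNBC M N) (h : N' ⊆ N) : IsNBC M N' :=
  fun X hX hne hsub => hN X hX hne (hsub.trans h)

theorem IsNBC.not_supp_subset (hN : IsNBC M N) {X : Finset α × Finset α} (hX : X ∈ M.C) :
    ¬ supp X ⊆ N :=
  fun h => hN X hX (M.supp_nonempty_of_mem hX) ((erase_subset _ _).trans h)

/-- The maximum of a circuit inside `N ∪ e` is `e`, so its broken circuit lies in `N`. -/
theorem IsNBC.not_supp_subset_insert (hN : IsNBC M N) {e : α} (he : ∀ x ∈ N, x < e) :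
    ∀ X ∈ M.C, ¬ supp X ⊆ insert e N := by
  intro X hX hsub
  have hne := M.supp_nonempty_of_mem hX
  refine hN X hX hne fun x hx => ?_
  obtain ⟨hxt, hxX⟩ := mem_erase.mp hx
  rcases mem_insert.mp (hsub hxX) with rfl | h
  · rcases mem_insert.mp (hsub (max'_mem _ hne)) with h | h
    · exact absurd h.symm hxt
    · exact absurd (le_max' _ x hxX) (he _ h).not_ge
  · exact h

end NBC

section InitialSegments
variable {m j : ℕ} {e : Fin m}

theorem Ek_succ (he : (e : ℕ) = j) : Ek m (j + 1) = insert e (Ek m j) := by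
  ext x
  simp only [Ek, mem_filter, mem_univ, true_and, mem_insert, Fin.ext_iff]
  omega

theorem notMem_Ek (he : (e : ℕ) = j) : e ∉ Ek m j := by
  simp [Ek, he]

theorem lt_of_mem_Ek (he : (e : ℕ) = j) {x : Fin m} (hx : x ∈ Ek m j) : x < e := by
  simp only [Ek, mem_filter, mem_univ, true_and] at hx
  exact Fin.lt_def.mpr (he ▸ hx)

theorem notMem_of_subset_compl_Ek_succ (he : (e : ℕ) = j) {A : Finset (Fin m)}
    (hA : A ⊆ (Ek m (j + 1))ᶜ) : e ∉ A :=
  fun h => mem_compl.mp (hA h) (Ek_succ he ▸ mem_insert_self e _)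

theorem subset_compl_Ek_of_succ (he : (e : ℕ) = j) {A : Finset (Fin m)}
    (hA : A ⊆ (Ek m (j + 1))ᶜ) : A ⊆ (Ek m j)ᶜ :=
  hA.trans (compl_subset_compl.mpr (Ek_succ he ▸ subset_insert e _))

end InitialSegments

section MNA
variable {m : ℕ} {M : OM (Fin m)} {k : ℕ} {N A : Finset (Fin m)}

theorem acyclic_MNA_iff (hN : IsNBC M N) :
    Acyclic (MNA M k N A) ↔ ∀ Y ∈ delC (Ek m k \ N) M.C, ¬ (reorient A Y).2 ⊆ N := by
  rw [MNA, ← contrC_reorientC]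
  refine (((M.delete (Ek m k \ N)).reorient A).acyclic_contrC_iff ?_).trans Set.forall_mem_image
  rintro _ ⟨Y, hY, rfl⟩
  rw [supp_reorient]
  exact hN.not_supp_subset hY.1

theorem reorientC_singleton_MNA {e : Fin m} (he : e ∉ A) :
    reorientC {e} (MNA M k N A) = MNA M k N (insert e A) := by
  simp only [MNA, reorientC, Set.image_image, ← reorient_insert he]

end MNA

theorem exists_mem_delC_insert_snd_subset {α : Type} [DecidableEq α] {M : OM α}
    {D N A : Finset α} {e : α} (heN : e ∉ N) (hind : ∀ Y ∈ M.C, ¬ supp Y ⊆ insert e N)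
    {Y₁ Y₂ : Finset α × Finset α} (hY₁ : Y₁ ∈ delC D M.C) (hY₂ : Y₂ ∈ delC D M.C)
    (hY₁N : (reorient A Y₁).2 ⊆ N) (hY₂N : (reorient {e} (reorient A Y₂)).2 ⊆ N) :
    ∃ Y ∈ delC (insert e D) M.C, (reorient A Y).2 ⊆ N := by
  have hU₂ := snd_subset_insert_of_reorient_singleton hY₂N
  by_cases he₁ : e ∉ supp Y₁
  · exact ⟨Y₁, mem_delC_insert_iff.mpr ⟨hY₁, he₁⟩, hY₁N⟩
  by_cases he₂ : e ∉ supp Y₂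
  · have he₂' : e ∉ (reorient A Y₂).2 :=
      fun h => he₂ (supp_reorient A Y₂ ▸ mem_union_right _ h)
    exact ⟨Y₂, mem_delC_insert_iff.mpr ⟨hY₂, he₂⟩, (subset_insert_iff_of_notMem he₂').mp hU₂⟩
  rw [not_not, ← supp_reorient A] at he₁ he₂
  have he₁' : e ∈ (reorient A Y₁).1 :=
    (mem_union.mp he₁).resolve_right fun h => heN (hY₁N h)
  have he₂' : e ∈ (reorient A Y₂).2 :=
    (mem_union.mp he₂).resolve_left (notMem_fst_of_reorient_singleton hY₂N heN)
  have hne : reorient A Y₁ ≠ (reorient A Y₂).swap := by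
    intro h
    refine hind Y₂ hY₂.1 (supp_reorient A Y₂ ▸ union_subset ?_ hU₂)
    exact (congrArg Prod.snd h ▸ hY₁N).trans (subset_insert e N)
  obtain ⟨_, ⟨X, hX, rfl⟩, hX1, hX2⟩ :=
    ((M.delete D).reorient A).exists_elim ⟨Y₁, hY₁, rfl⟩ ⟨Y₂, hY₂, rfl⟩ hne he₁' he₂'
  refine ⟨X, mem_delC_insert_iff.mpr ⟨hX, fun h => ?_⟩, fun x hx => ?_⟩
  · rw [← supp_reorient A] at h
    exact (mem_erase.mp (supp_subset_erase hX1 hX2 h)).1 rfl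
  · obtain ⟨hxe, hx⟩ := mem_erase.mp (hX2 hx)
    rcases mem_union.mp hx with h | h
    · exact hY₁N h
    · exact (mem_insert.mp (hU₂ h)).resolve_left hxe

section Preimages
variable {m j : ℕ} {M : OM (Fin m)} {e : Fin m} {N A : Finset (Fin m)}

theorem psi_erase_of_mem (he : (e : ℕ) = j) (hq : (N, A) ∈ NFam M (j + 1)) (heN : e ∈ N) :
    (N.erase e, A) ∈ NFam M j ∧ psi M j e (N.erase e, A) = (N, A) := by
  obtain ⟨hN, hNBC, hA, hAc⟩ := hq
  have heA := notMem_of_subset_compl_Ek_succ he hA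
  have hNBC' := hNBC.mono (erase_subset e N)
  have hD : Ek m j \ N.erase e = Ek m (j + 1) \ N := by
    rw [Ek_succ he, insert_sdiff_of_mem _ heN]
    ext x
    grind [notMem_Ek he]
  have key : ∀ Y ∈ delC (Ek m j \ N.erase e) M.C,
      ¬ (reorient A Y).2 ⊆ insert e (N.erase e) := by
    rwa [hD, insert_erase heN, ← acyclic_MNA_iff hNBC]
  have hre : Acyclic (reorientC {e} (MNA M j (N.erase e) A)) := by
    rw [reorientC_singleton_MNA heA, acyclic_MNA_iff hNBC']
    intro Y hY h
    rw [reorient_insert heA] at h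
    exact key Y hY (snd_subset_insert_of_reorient_singleton h)
  refine ⟨⟨subset_insert_iff.mp (Ek_succ he ▸ hN), hNBC', subset_compl_Ek_of_succ he hA,
    (acyclic_MNA_iff hNBC').mpr fun Y hY h => key Y hY (h.trans (subset_insert _ _))⟩, ?_⟩
  simp only [psi, if_neg heA, if_pos hre, insert_erase heN]

theorem psi_insert_of_notMem (he : (e : ℕ) = j) (hq : (N, A) ∈ NFam M (j + 1)) (heN : e ∉ N)
    (hre : Acyclic (reorientC {e} (MNA M j N A))) :
    (N, insert e A) ∈ NFam M j ∧ psi M j e (N, insert e A) = (N, A) := by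
  obtain ⟨hN, hNBC, hA, -⟩ := hq
  have heA := notMem_of_subset_compl_Ek_succ he hA
  refine ⟨⟨(subset_insert_iff_of_notMem heN).mp (Ek_succ he ▸ hN), hNBC,
    insert_subset (mem_compl.mpr (notMem_Ek he)) (subset_compl_Ek_of_succ he hA),
    reorientC_singleton_MNA heA ▸ hre⟩, ?_⟩
  simp only [psi, if_pos (mem_insert_self e A), erase_insert heA]

theorem psi_self_of_notMem (he : (e : ℕ) = j) (hq : (N, A) ∈ NFam M (j + 1)) (heN : e ∉ N)
    (hre : ¬ Acyclic (reorientC {e} (MNA M j N A))) :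
    (N, A) ∈ NFam M j ∧ psi M j e (N, A) = (N, A) := by
  obtain ⟨hN, hNBC, hA, hAc⟩ := hq
  have heA := notMem_of_subset_compl_Ek_succ he hA
  have hNj : N ⊆ Ek m j := (subset_insert_iff_of_notMem heN).mp (Ek_succ he ▸ hN)
  refine ⟨⟨hNj, hNBC, subset_compl_Ek_of_succ he hA, ?_⟩, ?_⟩
  · rw [acyclic_MNA_iff hNBC, Ek_succ he, insert_sdiff_of_notMem _ heN] at hAc
    rw [reorientC_singleton_MNA heA, acyclic_MNA_iff hNBC] at hre
    push Not at hre
    obtain ⟨Y₂, hY₂, hY₂N⟩ := hre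
    rw [reorient_insert heA] at hY₂N
    refine (acyclic_MNA_iff hNBC).mpr fun Y₁ hY₁ hY₁N => ?_
    have hind := hNBC.not_supp_subset_insert fun x hx => lt_of_mem_Ek he (hNj hx)
    obtain ⟨Y, hY, hYN⟩ := exists_mem_delC_insert_snd_subset heN hind hY₁ hY₂ hY₁N hY₂N
    exact hAc Y hY hYN
  · simp only [psi, if_neg heA, if_neg hre]

theorem exists_psi_eq (he : (e : ℕ) = j) :
    ∀ q ∈ NFam M (j + 1), ∃ p ∈ NFam M j, psi M j e p = q := by
  rintro ⟨N, A⟩ hq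
  by_cases heN : e ∈ N
  · exact ⟨_, psi_erase_of_mem he hq heN⟩
  by_cases hre : Acyclic (reorientC {e} (MNA M j N A))
  · exact ⟨_, psi_insert_of_notMem he hq heN hre⟩
  · exact ⟨_, psi_self_of_notMem he hq heN hre⟩

end Preimages

/-- **Surjectivity of `ψ_k`**: every `(N, A) ∈ 𝒩_k` is the image under `ψ_k` of some
`(N′, A′) ∈ 𝒩_{k−1}`. -/
theorem stmt_5 (m : ℕ) (M : OM (Fin m))
    (k : ℕ) (hk1 : 1 ≤ k) (hkm : k ≤ m) :
    ∀ q ∈ NFam M k, ∃ p ∈ NFam M (k - 1), psi M (k - 1) ⟨k - 1, by omega⟩ p = q := by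
  have := exists_psi_eq (M := M) (e := ⟨k - 1, by omega⟩) rfl
  rwa [Nat.sub_add_cancel hk1] at this
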